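/- arXiv:1507.00230 — 2 statements merged into one kernel-verified Lean document; each statement's English description precedes it below -/
import Mathlib

section
/- Let Λ be a free abelian group of rank 10 with basis {L, E, Γ₁, …, Γ₈} equipped with the symmetric bilinear form determined by (L·L)=2g−2, (L·E)=⌊(g+1)/2⌋, (E·E)=0, (Γᵢ)²=−2, (E·Γᵢ)=0, (L·Γᵢ)=dᵢ with 1 ≤ dᵢ < ⌊(g+1)/2⌋, and (Γᵢ·Γⱼ)=0 for i≠j. Then for any integer g ≥ 5 this bilinear form is even (all self-intersections are even) and has signature (1,9). -/
open Matrix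

/-- Gram matrix of the rank-10 lattice `Ω_g` with ordered basis
`L, E, Γ₁, …, Γ₈`: `(L·L) = 2g−2`, `(L·E) = ⌊(g+1)/2⌋`, `(E·E) = 0`,
`(Γᵢ·Γᵢ) = −2`, `(E·Γᵢ) = 0`, `(L·Γᵢ) = dᵢ`, `(Γᵢ·Γⱼ) = 0` for `i ≠ j`. -/
def gramOmega (g : ℤ) (d : Fin 8 → ℤ) : Matrix (Fin 10) (Fin 10) ℤ :=
  fun i j =>
    if hi : 2 ≤ (i : ℕ) then
      if hj : 2 ≤ (j : ℕ) then (if i = j then -2 else 0)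
      else if (j : ℕ) = 0 then d ⟨(i : ℕ) - 2, by have := i.isLt; omega⟩ else 0
    else if (i : ℕ) = 0 then
      if hj : 2 ≤ (j : ℕ) then d ⟨(j : ℕ) - 2, by have := j.isLt; omega⟩
      else if (j : ℕ) = 0 then 2 * g - 2 else (g + 1) / 2
    else
      if hj : 2 ≤ (j : ℕ) then 0
      else if (j : ℕ) = 0 then (g + 1) / 2 else 0

/-- The associated bilinear form on `ℤ¹⁰`. -/
def formOmega (g : ℤ) (d : Fin 8 → ℤ) (u v : Fin 10 → ℤ) : ℤ :=
  u ⬝ᵥ (gramOmega g d).mulVec v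

set_option maxRecDepth 2000

theorem sum10' {M : Type*} [AddCommMonoid M] (f : Fin 10 → M) :
    ∑ i, f i = f 0 + f 1 + f 2 + f 3 + f 4 + f 5 + f 6 + f 7 + f 8 + f 9 := by
  rw [Fin.sum_univ_castSucc, Fin.sum_univ_castSucc, Fin.sum_univ_eight]; rfl

theorem fx2 (h : ((2:Fin 10):ℕ) - 2 < 8) : (⟨((2:Fin 10):ℕ) - 2, h⟩ : Fin 8) = 0 := rfl
theorem fx3 (h : ((3:Fin 10):ℕ) - 2 < 8) : (⟨((3:Fin 10):ℕ) - 2, h⟩ : Fin 8) = 1 := rfl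
theorem fx4 (h : ((4:Fin 10):ℕ) - 2 < 8) : (⟨((4:Fin 10):ℕ) - 2, h⟩ : Fin 8) = 2 := rfl
theorem fx5 (h : ((5:Fin 10):ℕ) - 2 < 8) : (⟨((5:Fin 10):ℕ) - 2, h⟩ : Fin 8) = 3 := rfl
theorem fx6 (h : ((6:Fin 10):ℕ) - 2 < 8) : (⟨((6:Fin 10):ℕ) - 2, h⟩ : Fin 8) = 4 := rfl
theorem fx7 (h : ((7:Fin 10):ℕ) - 2 < 8) : (⟨((7:Fin 10):ℕ) - 2, h⟩ : Fin 8) = 5 := rfl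
theorem fx8 (h : ((8:Fin 10):ℕ) - 2 < 8) : (⟨((8:Fin 10):ℕ) - 2, h⟩ : Fin 8) = 6 := rfl
theorem fx9 (h : ((9:Fin 10):ℕ) - 2 < 8) : (⟨((9:Fin 10):ℕ) - 2, h⟩ : Fin 8) = 7 := rfl

noncomputable section

def mR (g : ℤ) : ℝ := (((g + 1) / 2 : ℤ) : ℝ)
def AR (g : ℤ) (d : Fin 8 → ℤ) : ℝ := 2 * (g : ℝ) - 2 + (∑ i, (d i : ℝ) ^ 2) / 2

def PP (g : ℤ) (d : Fin 8 → ℤ) : Matrix (Fin 10) (Fin 10) ℝ := fun i j =>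
  if (j : ℕ) = 0 then
    (if (i : ℕ) = 0 then 1 else if (i : ℕ) = 1 then 0
     else ((d ⟨(i : ℕ) - 2, by have := i.isLt; omega⟩ : ℤ) : ℝ) / 2)
  else if (j : ℕ) = 1 then
    (if (i : ℕ) = 0 then -(mR g) else if (i : ℕ) = 1 then AR g d
     else -(mR g) * ((d ⟨(i : ℕ) - 2, by have := i.isLt; omega⟩ : ℤ) : ℝ) / 2)
  else if i = j then 1 else 0

def NN (g : ℤ) (d : Fin 8 → ℤ) : Matrix (Fin 10) (Fin 10) ℝ := fun i j =>
  if (j : ℕ) = 0 then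
    (if (i : ℕ) = 0 then AR g d else if (i : ℕ) = 1 then mR g else 0)
  else if (j : ℕ) = 1 then
    (if (i : ℕ) = 1 then -(mR g) ^ 2 else 0)
  else if (i : ℕ) = 0 then ((d ⟨(j : ℕ) - 2, by have := j.isLt; omega⟩ : ℤ) : ℝ)
  else if i = j then -2 else 0

def QQ (g : ℤ) (d : Fin 8 → ℤ) : Matrix (Fin 10) (Fin 10) ℝ := fun i j =>
  if (i : ℕ) = 0 then
    (if (j : ℕ) = 0 then 1 else if (j : ℕ) = 1 then mR g / AR g d else 0)
  else if (i : ℕ) = 1 then (if (j : ℕ) = 1 then 1 / AR g d else 0)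
  else if (j : ℕ) = 0 then -((d ⟨(i : ℕ) - 2, by have := i.isLt; omega⟩ : ℤ) : ℝ) / 2
  else if i = j then 1 else 0

def ee (g : ℤ) (d : Fin 8 → ℤ) : Fin 10 → ℝ := fun i =>
  if (i : ℕ) = 0 then AR g d else if (i : ℕ) = 1 then -(AR g d) * (mR g) ^ 2 else -2

set_option maxHeartbeats 2000000 in
theorem hN (g : ℤ) (d : Fin 8 → ℤ) :
    (gramOmega g d).map (fun n : ℤ => (n : ℝ)) * PP g d = NN g d := by
  ext i j
  fin_cases i <;> fin_cases j <;>
    simp (config := { decide := true })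
      [Matrix.mul_apply, sum10', gramOmega, PP, NN, AR, mR, Fin.sum_univ_eight,
       fx2, fx3, fx4, fx5, fx6, fx7, fx8, fx9] <;>
    push_cast <;> ring

set_option maxHeartbeats 2000000 in
theorem hPN (g : ℤ) (d : Fin 8 → ℤ) :
    (PP g d)ᵀ * NN g d = Matrix.diagonal (ee g d) := by
  ext i j
  fin_cases i <;> fin_cases j <;>
    simp (config := { decide := true })
      [Matrix.mul_apply, Matrix.transpose_apply, Matrix.diagonal, sum10', PP, NN, ee,
       fx2, fx3, fx4, fx5, fx6, fx7, fx8, fx9] <;>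
    push_cast <;> ring

set_option maxHeartbeats 2000000 in
theorem hPQ (g : ℤ) (d : Fin 8 → ℤ) (hA : AR g d ≠ 0) :
    PP g d * QQ g d = 1 := by
  ext i j
  fin_cases i <;> fin_cases j <;>
    simp (config := { decide := true })
      [Matrix.mul_apply, Matrix.one_apply, sum10', PP, QQ,
       fx2, fx3, fx4, fx5, fx6, fx7, fx8, fx9]
  all_goals first | ring1 | exact mul_inv_cancel₀ hA | (rw [one_div, mul_inv_cancel₀ hA]) | field_simp

end

/-- For any `g ≥ 5` and `1 ≤ dᵢ < ⌊(g+1)/2⌋`, the lattice `Ω_g` is even and has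
signature `(1, 9)` (its real Gram matrix is congruent to a diagonal matrix with
one positive and nine negative entries). -/
theorem stmt0 (g : ℤ) (hg : 5 ≤ g) (d : Fin 8 → ℤ)
    (hd : ∀ i, 1 ≤ d i ∧ d i < (g + 1) / 2) :
    (∀ v : Fin 10 → ℤ, Even (formOmega g d v v)) ∧
    ∃ P : Matrix (Fin 10) (Fin 10) ℝ, IsUnit P.det ∧
      ∃ e : Fin 10 → ℝ,
        Pᵀ * (gramOmega g d).map (fun n : ℤ => (n : ℝ)) * P = Matrix.diagonal e ∧
        0 < e 0 ∧ ∀ i : Fin 10, i ≠ 0 → e i < 0 := by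
  have hgR : (5 : ℝ) ≤ (g : ℝ) := by exact_mod_cast hg
  have hsum : (0 : ℝ) ≤ (∑ i, (d i : ℝ) ^ 2) / 2 := by positivity
  have hA : 0 < AR g d := by
    unfold AR; nlinarith
  have hm : 0 < mR g := by
    have : (3 : ℤ) ≤ (g + 1) / 2 := by omega
    unfold mR; exact_mod_cast lt_of_lt_of_le (by norm_num) this
  constructor
  · intro v
    simp (config := { decide := true }) [formOmega, dotProduct, mulVec, sum10', gramOmega]
    ring_nf
    have h2 : ∀ x : ℤ, Even (x * 2) := fun x => ⟨x, by ring⟩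
    repeat' first | apply Even.add | apply Even.sub
    all_goals first | exact h2 _ | exact (h2 _).neg
  · refine ⟨PP g d, ?_, ee g d, ?_, ?_, ?_⟩
    · exact Matrix.isUnit_det_of_right_inverse (hPQ g d hA.ne')
    · rw [Matrix.mul_assoc, hN, hPN]
    · simpa [ee] using hA
    · intro i hi
      fin_cases i
      · exact absurd rfl hi
      · simp only [ee]
        have := mul_pos hA (pow_pos hm 2)
        norm_num
        nlinarith
      all_goals simp (config := { decide := true }) [ee]
end

section
/- Let g ≥ 11 be odd and let Ω_g be the rank-10 lattice with basis {L, E, Γ₁,…,Γ₈} with (L·L)=2g−2, (L·E)=(g+1)/2, (E·E)=0, (Γᵢ)²=−2, (E·Γᵢ)=0, (L·Γᵢ)=dᵢ where 1 ≤ dᵢ < (g+1)/2, and (Γᵢ·Γⱼ)=0 for i≠j. Then (L−E)² = g−3 ≥ 8, and for every element F = xL + yE + Σ zᵢΓᵢ with x > 0, one has (F·(L−E)) > 3 whenever (F·F) ≥ 0. -/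
open Matrix

/-- The basis vector `L`. -/
def eL : Fin 10 → ℤ := Pi.single 0 1

/-- The basis vector `E`. -/
def eE : Fin 10 → ℤ := Pi.single 1 1

lemma formOmega_eq (g : ℤ) (d : Fin 8 → ℤ) (u v : Fin 10 → ℤ) :
    formOmega g d u v = (2*g-2) * u 0 * v 0 + (g+1)/2 * (u 0 * v 1 + u 1 * v 0)
      + d 0 * (u 0 * v 2 + u 2 * v 0) - 2 * u 2 * v 2
      + d 1 * (u 0 * v 3 + u 3 * v 0) - 2 * u 3 * v 3
      + d 2 * (u 0 * v 4 + u 4 * v 0) - 2 * u 4 * v 4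
      + d 3 * (u 0 * v 5 + u 5 * v 0) - 2 * u 5 * v 5
      + d 4 * (u 0 * v 6 + u 6 * v 0) - 2 * u 6 * v 6
      + d 5 * (u 0 * v 7 + u 7 * v 0) - 2 * u 7 * v 7
      + d 6 * (u 0 * v 8 + u 8 * v 0) - 2 * u 8 * v 8
      + d 7 * (u 0 * v 9 + u 9 * v 0) - 2 * u 9 * v 9 := by
  simp only [formOmega, gramOmega, mulVec, dotProduct, Fin.sum_univ_succ, Fin.sum_univ_zero]
  norm_num [Fin.ext_iff]
  simp only [show (Fin.succ 2 : Fin 10) = 3 from rfl, show ((Fin.succ 2).succ : Fin 10) = 4 from rfl,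
    show ((Fin.succ 2).succ.succ : Fin 10) = 5 from rfl,
    show ((Fin.succ 2).succ.succ.succ : Fin 10) = 6 from rfl,
    show ((Fin.succ 2).succ.succ.succ.succ : Fin 10) = 7 from rfl,
    show ((Fin.succ 2).succ.succ.succ.succ.succ : Fin 10) = 8 from rfl,
    show ((Fin.succ 2).succ.succ.succ.succ.succ.succ : Fin 10) = 9 from rfl,
    show (⟨2, by omega⟩ : Fin 8) = 2 from rfl, show (⟨3, by omega⟩ : Fin 8) = 3 from rfl,
    show (⟨4, by omega⟩ : Fin 8) = 4 from rfl, show (⟨5, by omega⟩ : Fin 8) = 5 from rfl,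
    show (⟨6, by omega⟩ : Fin 8) = 6 from rfl, show (⟨7, by omega⟩ : Fin 8) = 7 from rfl]
  ring
lemma keyOmega (m x y z2 z3 z4 z5 z6 z7 z8 z9 c2 c3 c4 c5 c6 c7 c8 c9 : ℤ)
    (hm : 6 ≤ m) (hx : 1 ≤ x)
    (hQ : 0 ≤ (4 - 2*m)*x^2
        + 2*((3*m - 4)*x + m*y + c2*z2 + c3*z3 + c4*z4 + c5*z5 + c6*z6 + c7*z7 + c8*z8 + c9*z9)*x
        - 2*(z2^2 + z3^2 + z4^2 + z5^2 + z6^2 + z7^2 + z8^2 + z9^2)) :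
    3 < (3*m - 4)*x + m*y + c2*z2 + c3*z3 + c4*z4 + c5*z5 + c6*z6 + c7*z7 + c8*z8 + c9*z9 := by
  set s := (3*m - 4)*x + m*y + c2*z2 + c3*z3 + c4*z4 + c5*z5 + c6*z6 + c7*z7 + c8*z8 + c9*z9 with hs
  by_contra h
  push_neg at h
  have h1 : s * x ≤ 3 * x := mul_le_mul_of_nonneg_right h (by linarith)
  have h2 : 0 ≤ (2*m - 4) * (x^2 - x) :=
    mul_nonneg (by linarith) (by nlinarith)
  have h3 : 0 ≤ (2*m - 10) * (x - 1) := mul_nonneg (by linarith) (by linarith)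
  nlinarith [sq_nonneg z2, sq_nonneg z3, sq_nonneg z4, sq_nonneg z5,
    sq_nonneg z6, sq_nonneg z7, sq_nonneg z8, sq_nonneg z9]

/-- In `Ω_g` with `g ≥ 11` odd. -/
theorem stmt2 (g : ℤ) (hg : 11 ≤ g) (hodd : Odd g) (d : Fin 8 → ℤ)
    (hd : ∀ i, 1 ≤ d i ∧ d i < (g + 1) / 2) :
    formOmega g d (eL - eE) (eL - eE) = g - 3 ∧ 8 ≤ g - 3 ∧
    ∀ v : Fin 10 → ℤ, 0 < v 0 → 0 ≤ formOmega g d v v →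
      3 < formOmega g d v (eL - eE) := by
  obtain ⟨k, hk⟩ := hodd
  set m : ℤ := k + 1 with hm
  have hdiv : (g + 1) / 2 = m := by omega
  have hg2 : g = 2 * m - 1 := by omega
  have hm6 : 6 ≤ m := by omega
  have h0 : (eL - eE) 0 = 1 := by decide
  have h1 : (eL - eE) 1 = -1 := by decide
  have h2 : (eL - eE) 2 = 0 := by decide
  have h3 : (eL - eE) 3 = 0 := by decide
  have h4 : (eL - eE) 4 = 0 := by decide
  have h5 : (eL - eE) 5 = 0 := by decide
  have h6 : (eL - eE) 6 = 0 := by decide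
  have h7 : (eL - eE) 7 = 0 := by decide
  have h8 : (eL - eE) 8 = 0 := by decide
  have h9 : (eL - eE) 9 = 0 := by decide
  refine ⟨?_, by omega, fun v hx hQ => ?_⟩
  · rw [formOmega_eq]
    simp only [h0, h1, h2, h3, h4, h5, h6, h7, h8, h9, hdiv]
    ring_nf
    omega
  · rw [formOmega_eq] at hQ ⊢
    simp only [h0, h1, h2, h3, h4, h5, h6, h7, h8, h9, hdiv] at hQ ⊢
    rw [hg2] at hQ ⊢
    have key := keyOmega m (v 0) (v 1) (v 2) (v 3) (v 4) (v 5) (v 6) (v 7) (v 8) (v 9)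
      (d 0) (d 1) (d 2) (d 3) (d 4) (d 5) (d 6) (d 7) hm6 hx (by linarith)
    linarith [key]
end
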